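/- Let G be a connected undirected graph on vertices {1,…,n} (n ≥ 2), d ≥ 1, and let ν = inf{ (∑_i ‖F(x)_i‖²)^{1/2} : ∑_i ‖x_i − x̄‖² = 1 }. Suppose x : [0,T] → (ℝ^d)^n is differentiable, satisfies xᵢ′(t) = F(x(t))_i for all i and all t ∈ [0,T], and x_i(t) ≠ x_j(t) for every edge {i,j} of G and every t ∈ [0,T]. Then φ(x(T)) ≤ φ(x(0)) − ν²·T, where φ(x) = ∑_{{i,j} ∈ E} ‖x_j − x_i‖ is the sum of distances over the (undirected) edges. In particular, such a coincidence-free solution can exist only for T ≤ φ(x(0))/ν². -/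

import Mathlib

/-!
Along the flow each edge length `‖x_j - x_i‖` is differentiable, since its endpoints never meet,
with derivative `⟪u_ij, F_j - F_i⟫`. Summing over the edges and using `u_ji = -u_ij` gives
`φ' = -∑_i ‖F_i‖²`. The field is invariant under translating and positively rescaling the
configuration, so moving `x(t)` to zero centroid and unit spread shows `‖F(x(t))‖ ≥ ν`. Hence
`φ' ≤ -ν²` on `[0, T]`, and the mean value inequality concludes.
-/

open Finset

/-- The bearing from agent `i` to agent `j`: the unit vector pointing from `x i` to `x j`,
or `0` when the agents coincide. -/
noncomputable def bearing {d n : ℕ} (x : Fin n → EuclideanSpace ℝ (Fin d)) (i j : Fin n) :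
    EuclideanSpace ℝ (Fin d) :=
  ‖x j - x i‖⁻¹ • (x j - x i)

/-- The bearing-only consensus vector field `F(x)_i = ∑_{j ∈ N_i} u_{ij}(x)`. -/
noncomputable def consField {d n : ℕ} (G : SimpleGraph (Fin n)) [DecidableRel G.Adj]
    (x : Fin n → EuclideanSpace ℝ (Fin d)) (i : Fin n) : EuclideanSpace ℝ (Fin d) :=
  ∑ j ∈ G.neighborFinset i, bearing x i j

/-- The potential `φ(x) = ∑_{{i,j} ∈ E} ‖x_j - x_i‖`: sum of distances over undirected edges,
each unordered pair counted once (hence half the sum over ordered adjacent pairs). -/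
noncomputable def consPotential {d n : ℕ} (G : SimpleGraph (Fin n)) [DecidableRel G.Adj]
    (x : Fin n → EuclideanSpace ℝ (Fin d)) : ℝ :=
  (1 / 2) * ∑ i, ∑ j ∈ G.neighborFinset i, ‖x j - x i‖

open scoped InnerProductSpace

theorem HasDerivAt.norm {E : Type*} [NormedAddCommGroup E] [InnerProductSpace ℝ E]
    {y : ℝ → E} {y' : E} {t : ℝ} (hy : HasDerivAt y y' t) (h0 : y t ≠ 0) :
    HasDerivAt (fun s => ‖y s‖) (⟪NormedSpace.normalize (y t), y'⟫_ℝ) t := by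
  have hne : ‖y t‖ ≠ 0 := norm_ne_zero_iff.mpr h0
  have h := hy.norm_sq.sqrt (pow_ne_zero 2 hne)
  simp only [Real.sqrt_sq (norm_nonneg _)] at h
  convert h using 1
  rw [NormedSpace.normalize, real_inner_smul_left, real_inner_comm]
  field_simp

theorem sub_le_mul_of_hasDerivAt_le {f f' : ℝ → ℝ} {a b C : ℝ} (hab : a ≤ b)
    (hf : ∀ t ∈ Set.Icc a b, HasDerivAt f (f' t) t) (hC : ∀ t ∈ Set.Icc a b, f' t ≤ C) :
    f b - f a ≤ C * (b - a) := by
  refine (convex_Icc a b).image_sub_le_mul_sub_of_deriv_le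
    (fun t ht => (hf t ht).continuousAt.continuousWithinAt)
    (fun t ht => (hf t (interior_subset ht)).differentiableAt.differentiableWithinAt)
    (fun t ht => ?_) a (Set.left_mem_Icc.mpr hab) b (Set.right_mem_Icc.mpr hab) hab
  rw [(hf t (interior_subset ht)).deriv]
  exact hC t (interior_subset ht)

theorem sum_sub_centroid {E : Type*} [AddCommGroup E] [Module ℝ E] {n : ℕ} (hn : n ≠ 0)
    (x : Fin n → E) : ∑ i, (x i - (n : ℝ)⁻¹ • ∑ j, x j) = 0 := by
  rw [sum_sub_distrib, sum_const, card_univ, Fintype.card_fin, ← Nat.cast_smul_eq_nsmul ℝ,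
    smul_inv_smul₀ (Nat.cast_ne_zero.mpr hn), sub_self]

theorem SimpleGraph.sum_sum_neighborFinset_comm {V M : Type*} [Fintype V] [AddCommMonoid M]
    (G : SimpleGraph V) [DecidableRel G.Adj] (f : V → V → M) :
    ∑ i, ∑ j ∈ G.neighborFinset i, f i j = ∑ i, ∑ j ∈ G.neighborFinset i, f j i := by
  simp_rw [SimpleGraph.neighborFinset_eq_filter, sum_filter]
  rw [sum_comm]
  exact sum_congr rfl fun i _ => sum_congr rfl fun j _ => if_congr (G.adj_comm j i) rfl rfl

section Bearing

variable {d n : ℕ}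

theorem bearing_eq_normalize (x : Fin n → EuclideanSpace ℝ (Fin d)) (i j : Fin n) :
    bearing x i j = NormedSpace.normalize (x j - x i) :=
  rfl

theorem bearing_swap (x : Fin n → EuclideanSpace ℝ (Fin d)) (i j : Fin n) :
    bearing x j i = -bearing x i j := by
  rw [bearing_eq_normalize, bearing_eq_normalize, ← NormedSpace.normalize_neg, neg_sub]

theorem bearing_smul_sub (x : Fin n → EuclideanSpace ℝ (Fin d)) {c : ℝ} (hc : 0 < c)
    (m : EuclideanSpace ℝ (Fin d)) (i j : Fin n) :
    bearing (fun k => c • (x k - m)) i j = bearing x i j := by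
  rw [bearing_eq_normalize, bearing_eq_normalize, ← smul_sub, sub_sub_sub_cancel_right,
    NormedSpace.normalize_smul_of_pos hc]

variable (G : SimpleGraph (Fin n)) [DecidableRel G.Adj]

theorem consField_smul_sub (x : Fin n → EuclideanSpace ℝ (Fin d)) {c : ℝ} (hc : 0 < c)
    (m : EuclideanSpace ℝ (Fin d)) :
    consField G (fun k => c • (x k - m)) = consField G x :=
  funext fun i => sum_congr rfl fun j _ => bearing_smul_sub x hc m i j

theorem half_sum_inner_bearing_sub (x v : Fin n → EuclideanSpace ℝ (Fin d)) :
    (1 / 2) * ∑ i, ∑ j ∈ G.neighborFinset i, ⟪bearing x i j, v j - v i⟫_ℝ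
      = -∑ i, ⟪consField G x i, v i⟫_ℝ := by
  have hsum : ∑ i, ∑ j ∈ G.neighborFinset i, ⟪bearing x i j, v i⟫_ℝ
      = ∑ i, ⟪consField G x i, v i⟫_ℝ :=
    sum_congr rfl fun i _ => (sum_inner _ _ _).symm
  have hswap : ∑ i, ∑ j ∈ G.neighborFinset i, ⟪bearing x i j, v j⟫_ℝ
      = -∑ i, ∑ j ∈ G.neighborFinset i, ⟪bearing x i j, v i⟫_ℝ := by
    rw [G.sum_sum_neighborFinset_comm, ← sum_neg_distrib]
    refine sum_congr rfl fun i _ => ?_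
    rw [← sum_neg_distrib]
    exact sum_congr rfl fun j _ => by rw [bearing_swap, inner_neg_left]
  simp only [inner_sub_right, sum_sub_distrib, hswap, hsum]
  ring

theorem hasDerivAt_consPotential {x : ℝ → Fin n → EuclideanSpace ℝ (Fin d)}
    {v : Fin n → EuclideanSpace ℝ (Fin d)} {t : ℝ} (hx : ∀ i, HasDerivAt (fun s => x s i) (v i) t)
    (hfree : ∀ i j, G.Adj i j → x t i ≠ x t j) :
    HasDerivAt (fun s => consPotential G (x s)) (-∑ i, ⟪consField G (x t) i, v i⟫_ℝ) t := by
  rw [← half_sum_inner_bearing_sub]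
  refine HasDerivAt.const_mul _ (HasDerivAt.fun_sum fun i _ => HasDerivAt.fun_sum fun j hj => ?_)
  exact ((hx j).sub (hx i)).norm
    (sub_ne_zero.mpr (hfree j i ((G.mem_neighborFinset i j).mp hj).symm))

end Bearing

section Rate

variable (d : ℕ) {n : ℕ} (G : SimpleGraph (Fin n)) [DecidableRel G.Adj]

noncomputable def consFieldInf : ℝ :=
  sInf { r : ℝ | ∃ x : Fin n → EuclideanSpace ℝ (Fin d),
    (∑ i, ‖x i - (n : ℝ)⁻¹ • ∑ j, x j‖ ^ 2) = 1 ∧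
    r = Real.sqrt (∑ i, ‖consField G x i‖ ^ 2) }

theorem consFieldInf_nonneg : 0 ≤ consFieldInf d G :=
  Real.sInf_nonneg fun _ ⟨_, _, hr⟩ => hr ▸ Real.sqrt_nonneg _

variable {d G}

theorem consFieldInf_le_of_ne {x : Fin n → EuclideanSpace ℝ (Fin d)} {i j : Fin n}
    (hij : x i ≠ x j) : consFieldInf d G ≤ Real.sqrt (∑ k, ‖consField G x k‖ ^ 2) := by
  set m := (n : ℝ)⁻¹ • ∑ k, x k
  set Q := ∑ k, ‖x k - m‖ ^ 2
  have hQ : 0 < Q := by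
    refine lt_of_le_of_ne (sum_nonneg fun k _ => sq_nonneg _) fun hQ => hij ?_
    have hm : ∀ k, x k = m := fun k => by
      simpa [sub_eq_zero] using (sum_eq_zero_iff_of_nonneg fun k _ => sq_nonneg _).mp hQ.symm k
    rw [hm i, hm j]
  have hc : 0 < (Real.sqrt Q)⁻¹ := inv_pos.mpr (Real.sqrt_pos.mpr hQ)
  have hn : n ≠ 0 := Fin.pos_iff_nonempty.mpr ⟨i⟩ |>.ne'
  set y := fun k => (Real.sqrt Q)⁻¹ • (x k - m)
  refine csInf_le ⟨0, fun _ ⟨_, _, hr⟩ => hr ▸ Real.sqrt_nonneg _⟩ ⟨y, ?_, ?_⟩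
  · have hy : ∑ k, y k = 0 := by rw [← smul_sum, sum_sub_centroid hn, smul_zero]
    simp only [hy, smul_zero, sub_zero, y, norm_smul, mul_pow, ← mul_sum, norm_inv,
      Real.norm_eq_abs, abs_of_nonneg (Real.sqrt_nonneg Q), inv_pow, Real.sq_sqrt hQ.le]
    exact inv_mul_cancel₀ hQ.ne'
  · rw [consField_smul_sub G x hc m]

theorem consFieldInf_sq_le {x : Fin n → EuclideanSpace ℝ (Fin d)}
    (hx : ∀ i j, G.Adj i j → x i ≠ x j) :
    consFieldInf d G ^ 2 ≤ ∑ i, ‖consField G x i‖ ^ 2 := by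
  by_cases hcons : ∃ i j, x i ≠ x j
  · obtain ⟨i, j, hij⟩ := hcons
    calc consFieldInf d G ^ 2 ≤ Real.sqrt (∑ k, ‖consField G x k‖ ^ 2) ^ 2 :=
          pow_le_pow_left₀ (consFieldInf_nonneg d G) (consFieldInf_le_of_ne hij) 2
      _ = ∑ k, ‖consField G x k‖ ^ 2 := Real.sq_sqrt (sum_nonneg fun _ _ => sq_nonneg _)
  · -- a consensus configuration is admissible only for an edgeless graph, where `F ≡ 0`
    push Not at hcons
    have hedgeless : ∀ i, G.neighborFinset i = ∅ := fun i =>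
      eq_empty_of_forall_notMem fun j hj => hx i j ((G.mem_neighborFinset i j).mp hj) (hcons i j)
    have hzero : consFieldInf d G = 0 := by
      refine le_antisymm (Real.sInf_nonpos fun _ ⟨_, _, hr⟩ => ?_) (consFieldInf_nonneg d G)
      simp [hr, consField, hedgeless]
    rw [hzero, zero_pow two_ne_zero]
    positivity

end Rate

theorem stmt_5_general {d n : ℕ}
    (G : SimpleGraph (Fin n)) [DecidableRel G.Adj]
    (ν : ℝ)
    (hν : ν = sInf { r : ℝ | ∃ x : Fin n → EuclideanSpace ℝ (Fin d),
        (∑ i, ‖x i - (n : ℝ)⁻¹ • ∑ j, x j‖ ^ 2) = 1 ∧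
        r = Real.sqrt (∑ i, ‖consField G x i‖ ^ 2) })
    (T : ℝ) (hT : 0 ≤ T)
    (x : ℝ → Fin n → EuclideanSpace ℝ (Fin d))
    (hode : ∀ i, ∀ t ∈ Set.Icc (0 : ℝ) T,
      HasDerivAt (fun s => x s i) (consField G (x t) i) t)
    (hfree : ∀ t ∈ Set.Icc (0 : ℝ) T, ∀ i j, G.Adj i j → x t i ≠ x t j) :
    consPotential G (x T) ≤ consPotential G (x 0) - ν ^ 2 * T := by
  have hdissip : ∀ t ∈ Set.Icc (0 : ℝ) T, HasDerivAt (fun s => consPotential G (x s))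
      (-∑ i, ‖consField G (x t) i‖ ^ 2) t := fun t ht => by
    simpa only [real_inner_self_eq_norm_sq] using
      hasDerivAt_consPotential G (fun i => hode i t ht) (hfree t ht)
  have hrate : ∀ t ∈ Set.Icc (0 : ℝ) T, -∑ i, ‖consField G (x t) i‖ ^ 2 ≤ -ν ^ 2 :=
    fun t ht => neg_le_neg (hν ▸ consFieldInf_sq_le (hfree t ht))
  have := sub_le_mul_of_hasDerivAt_le hT hdissip hrate
  linarith

theorem stmt_5 {d n : ℕ} (hd : 1 ≤ d) (hn : 2 ≤ n)
    (G : SimpleGraph (Fin n)) [DecidableRel G.Adj] (hG : G.Connected)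
    (ν : ℝ)
    (hν : ν = sInf { r : ℝ | ∃ x : Fin n → EuclideanSpace ℝ (Fin d),
        (∑ i, ‖x i - (n : ℝ)⁻¹ • ∑ j, x j‖ ^ 2) = 1 ∧
        r = Real.sqrt (∑ i, ‖consField G x i‖ ^ 2) })
    (T : ℝ) (hT : 0 ≤ T)
    (x : ℝ → Fin n → EuclideanSpace ℝ (Fin d))
    (hode : ∀ i, ∀ t ∈ Set.Icc (0 : ℝ) T,
      HasDerivAt (fun s => x s i) (consField G (x t) i) t)
    (hfree : ∀ t ∈ Set.Icc (0 : ℝ) T, ∀ i j, G.Adj i j → x t i ≠ x t j) :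
    consPotential G (x T) ≤ consPotential G (x 0) - ν ^ 2 * T :=
  stmt_5_general G ν hν T hT x hode hfree
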